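/- Let K = ℚ(√5) ⊆ ℝ and let φ = (1 + √5)/2 ∈ K. For every prime number p, consider the quaternion algebra B = ( −φ, p / K ) over K, i.e., the K-algebra with basis 1, i, j, ij satisfying i² = −φ, j² = p, and ji = −ij. Then there exists an element c ∈ B with c ∉ K·1 such that c² = s·1 for some s ∈ K, and s is totally negative: both field embeddings σ : K → ℝ satisfy σ(s) < 0. -/

import Mathlib

/-!
Take `c = φ^p i + ij`, a pure quaternion not in `K`, with
`c² = -φ · φ^{2p} + φ p = φ (p - (φ + 1)^p)`.
An embedding sends `φ` to a root `t` of `t² = t + 1`. If `t = φ > 1`, Bernoulli gives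
`(1 + t)^p ≥ 1 + p t > p`; if `t = -1/φ ∈ (-1, 0)`, then `0 < 1 + t < 1` and `(1 + t)^p < 1 ≤ p`.
In both cases `t` and `p - (1 + t)^p` have opposite signs.
-/

open Quaternion

/-- The real quadratic field `K = ℚ(√5) ⊆ ℝ`. -/
noncomputable def Ksqrt5 : IntermediateField ℚ ℝ :=
  IntermediateField.adjoin ℚ {Real.sqrt 5}

/-- The golden ratio `φ = (1 + √5) / 2` as an element of `ℚ(√5)`. -/
noncomputable def phi : Ksqrt5 :=
  ⟨(1 + Real.sqrt 5) / 2, by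
    have h2 : (2 : ℝ) ∈ Ksqrt5 := by
      have := add_mem (one_mem Ksqrt5) (one_mem Ksqrt5)
      norm_num at this ⊢
    exact div_mem (add_mem (one_mem _)
      (IntermediateField.subset_adjoin ℚ _ (Set.mem_singleton _))) h2⟩

namespace QuaternionAlgebra

variable {R : Type*} [CommRing R] {a b : R}

theorem mk_zero_sq (x y z : R) :
    (⟨0, x, y, z⟩ : ℍ[R, a, b]) ^ 2 =
      algebraMap R ℍ[R, a, b] (a * x ^ 2 + b * y ^ 2 - a * b * z ^ 2) := by
  rw [sq, algebraMap_eq]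
  ext <;> simp <;> ring

theorem notMem_range_algebraMap_of_imI_ne_zero {c : ℍ[R, a, b]} (hc : c.imI ≠ 0) :
    c ∉ Set.range (algebraMap R ℍ[R, a, b]) := by
  rintro ⟨r, rfl⟩
  exact hc (by simp [algebraMap_eq])

end QuaternionAlgebra

theorem mul_natCast_sub_pow_neg_of_sq_eq_add_one {K : Type*} [Field K] [LinearOrder K]
    [IsStrictOrderedRing K] {t : K} (ht : t ^ 2 = t + 1) {n : ℕ} (hn : n ≠ 0) :
    t * (n - t ^ (2 * n)) < 0 := by
  rw [pow_mul, ht]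
  rcases lt_or_gt_of_ne (show t ≠ 0 by rintro rfl; norm_num at ht) with hneg | hpos
  · have hlt : (t + 1) ^ n < 1 := pow_lt_one₀ (by nlinarith) (by linarith) hn
    have : (1 : K) ≤ n := by exact_mod_cast Nat.one_le_iff_ne_zero.2 hn
    exact mul_neg_of_neg_of_pos hneg (by linarith)
  · have ht1 : 1 ≤ t := by nlinarith
    have hbern : 1 + n * t ≤ (1 + t) ^ n := one_add_mul_le_pow (by linarith) n
    have : (n : K) ≤ n * t := le_mul_of_one_le_right (Nat.cast_nonneg n) ht1
    exact mul_neg_of_pos_of_neg hpos (by rw [add_comm t]; linarith)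

theorem phi_sq : phi ^ 2 = phi + 1 := by
  apply Subtype.ext
  push_cast [phi]
  nlinarith [Real.mul_self_sqrt (show (0 : ℝ) ≤ 5 by norm_num)]

theorem phi_ne_zero : phi ≠ 0 := fun h => by simpa [h] using phi_sq

theorem exists_totally_negative_square_sqrt5 (p : ℕ) (hp : p.Prime) :
    ∃ c : ℍ[Ksqrt5, -phi, (p : Ksqrt5)],
      c ∉ Set.range (algebraMap Ksqrt5 ℍ[Ksqrt5, -phi, (p : Ksqrt5)]) ∧
      ∃ s : Ksqrt5, c ^ 2 = algebraMap Ksqrt5 ℍ[Ksqrt5, -phi, (p : Ksqrt5)] s ∧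
        ∀ σ : Ksqrt5 →+* ℝ, σ s < 0 := by
  refine ⟨⟨0, phi ^ p, 0, 1⟩,
    QuaternionAlgebra.notMem_range_algebraMap_of_imI_ne_zero (pow_ne_zero p phi_ne_zero),
    phi * (p - phi ^ (2 * p)), ?_, fun σ => ?_⟩
  · rw [QuaternionAlgebra.mk_zero_sq]
    congr 1
    ring
  · have hσ : σ phi ^ 2 = σ phi + 1 := by rw [← map_pow, phi_sq, map_add, map_one]
    simpa using mul_natCast_sub_pow_neg_of_sq_eq_add_one hσ hp.ne_zero
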